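/- Suppose the digraph of W is quasi-strongly connected and the leader set 𝓛 admits no gauge (the subgraph among leaders is structurally unbalanced). Then for every closed-loop trajectory (x, ς, s) of the prescribed-time sliding mode protocol with data (ρ1, ρ2, T_r, T_s, μ1, μ2, μ3, δ, d), one has x t k = 0 for all nodes k and all t ≥ T_r + T_s (prescribed-time stability within the preassigned time T_r + T_s despite the disturbances). -/

import Mathlib

open Matrix

/-- Time-varying gain: `μ_T(t) = κ/(T − t)` for `0 ≤ t < T`, `0` otherwise. -/
noncomputable def gain (κ T t : ℝ) : ℝ := if 0 ≤ t ∧ t < T then κ / (T - t) else 0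

/-- Signed Laplacian `L = D − W` with `D k k = ∑_l |W k l|`. -/
noncomputable def sLap {N : ℕ} (W : Matrix (Fin N) (Fin N) ℝ) : Matrix (Fin N) (Fin N) ℝ :=
  Matrix.diagonal (fun k => ∑ l, |W k l|) - W

/-- Node `i` reaches node `j`: reflexive–transitive closure of the edge relation
`E i j ↔ W j i ≠ 0`. -/
def Reaches {N : ℕ} (W : Matrix (Fin N) (Fin N) ℝ) : Fin N → Fin N → Prop :=
  Relation.ReflTransGen (fun i j => W j i ≠ 0)

def StronglyConnected {N : ℕ} (W : Matrix (Fin N) (Fin N) ℝ) : Prop :=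
  ∀ i j, Reaches W i j

def QuasiStronglyConnected {N : ℕ} (W : Matrix (Fin N) (Fin N) ℝ) : Prop :=
  ∃ r, ∀ j, Reaches W r j

def WeaklyConnected {N : ℕ} (W : Matrix (Fin N) (Fin N) ℝ) : Prop :=
  ∀ i j, Relation.ReflTransGen (fun a b => W b a ≠ 0 ∨ W a b ≠ 0) i j

/-- `k` is a leader: every node reaching `k` is reached back by `k`. -/
def IsLeader {N : ℕ} (W : Matrix (Fin N) (Fin N) ℝ) (k : Fin N) : Prop :=
  ∀ j, Reaches W j k → Reaches W k j

/-- Closed strong component of a leader `k`. -/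
def CSC {N : ℕ} (W : Matrix (Fin N) (Fin N) ℝ) (k : Fin N) : Set (Fin N) :=
  {j | Reaches W j k ∧ Reaches W k j}

/-- A gauge for a node set `S`. -/
def IsGauge {N : ℕ} (W : Matrix (Fin N) (Fin N) ℝ) (S : Set (Fin N)) (g : Fin N → ℝ) : Prop :=
  (∀ k ∈ S, g k = 1 ∨ g k = -1) ∧ ∀ k ∈ S, ∀ l ∈ S, g k * W k l * g l = |W k l|

/-- Nominal prescribed-time trajectory of the protocol (4). -/
def NominalTraj {N : ℕ} (W : Matrix (Fin N) (Fin N) ℝ) (κ ρ1 ρ2 T1 : ℝ)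
    (X : ℝ → Fin N → ℝ) : Prop :=
  Continuous X ∧
  ∀ t : ℝ, 0 ≤ t → t ≠ T1 →
    HasDerivAt X ((-(ρ1 + ρ2 * gain κ T1 t)) • (sLap W).mulVec (X t)) t

/-- Closed-loop trajectory of the prescribed-time sliding mode protocol (47)-(48):
`x` states, `ς` auxiliary variable (σ = x + ς), `s` a Filippov selection of sign(σ),
`d` the disturbances. -/
def SMCTraj {N : ℕ} (W : Matrix (Fin N) (Fin N) ℝ) (κ ρ1 ρ2 Tr Ts μ1 μ2 μ3 : ℝ)
    (d x ς s : ℝ → Fin N → ℝ) : Prop :=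
  Continuous x ∧ Continuous ς ∧
  (∀ t k, |s t k| ≤ 1 ∧ s t k * (x t k + ς t k) = |x t k + ς t k|) ∧
  ∀ t : ℝ, 0 ≤ t → t ≠ Tr → t ≠ Tr + Ts →
    (HasDerivAt ς ((ρ1 + ρ2 * gain κ (Tr + Ts) t) • (sLap W).mulVec (x t)) t ∧
     ∀ k, HasDerivAt (fun τ => x τ k)
       (-(ρ1 + ρ2 * gain κ (Tr + Ts) t) * ((sLap W).mulVec (x t)) k
         - μ1 * s t k - (μ2 + μ3 * gain κ Tr t) * (x t k + ς t k) + d t k) t)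

/-!
On `[0, Tr)` the sliding variable `σ = x + ς` satisfies `σ σ' ≤ -(μ2 + μ3 κ / (Tr - t)) σ²`,
since the switching gain `μ1` dominates the disturbance; the blow-up of the gain forces `σ(Tr) = 0`,
and `σ²` cannot increase afterwards. From `Tr` on, `x' = -ς'`, so `x` follows the nominal
protocol `x' = -(ρ1 + ρ2 μ_T) L x`. A kernel vector of `L`, divided by its maximal modulus, would
be a gauge on the leaders, so `L` is nonsingular, and Gershgorin's theorem puts its spectrum in
the open right half-plane. In the time scale `τ = ∫ (ρ1 + ρ2 κ / (T - t)) dt`, which tends to `∞`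
at `T`, the factors `(L - μ) ⋯` of the Cayley–Hamilton product can be peeled off one at a time,
each decaying like `exp (-c τ)`; hence `x(T) = 0`, and uniqueness for `x' = -ρ1 L x` keeps `x` at
`0` after `T`.
-/

open Filter Topology Set Real Polynomial

lemma gain_of_lt {κ T t : ℝ} (h0 : 0 ≤ t) (ht : t < T) : gain κ T t = κ / (T - t) :=
  if_pos ⟨h0, ht⟩

lemma gain_of_le {κ T t : ℝ} (ht : T ≤ t) : gain κ T t = 0 :=
  if_neg fun h => (not_le.2 h.2) ht

lemma gain_nonneg {κ : ℝ} (hκ : 0 ≤ κ) (T t : ℝ) : 0 ≤ gain κ T t := by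
  unfold gain
  split_ifs with h
  · exact div_nonneg hκ (sub_nonneg.2 h.2.le)
  · exact le_rfl

lemma hasDerivAt_neg_log_sub {b t : ℝ} (ht : t < b) :
    HasDerivAt (fun s => -log (b - s)) (b - t)⁻¹ t := by
  have h := (((hasDerivAt_id' t).const_sub b).log (sub_pos.2 ht).ne').fun_neg
  exact h.congr_deriv (by rw [neg_div, neg_neg, one_div])

lemma tendsto_neg_log_sub_nhdsLT (b : ℝ) :
    Tendsto (fun s => -log (b - s)) (𝓝[<] b) atTop := by
  have h : Tendsto (fun s => b - s) (𝓝[<] b) (𝓝[>] 0) := by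
    refine tendsto_nhdsWithin_of_tendsto_nhds_of_eventually_within _ ?_ ?_
    · simpa using ((continuous_sub_left b).tendsto b).mono_left (nhdsWithin_le_nhds (s := Iio b))
    · filter_upwards [self_mem_nhdsWithin] with s (hs : s < b) using sub_pos.2 hs
  exact tendsto_neg_atBot_atTop.comp (tendsto_log_nhdsGT_zero.comp h)

lemma eq_zero_of_norm_le_mul_exp_neg {E : Type*} [NormedAddCommGroup E] {f : ℝ → E}
    {τ : ℝ → ℝ} {b C c : ℝ} (hc : 0 < c) (hf : ContinuousWithinAt f (Iio b) b)
    (hτ : Tendsto τ (𝓝[<] b) atTop) (hbound : ∀ᶠ t in 𝓝[<] b, ‖f t‖ ≤ C * exp (-(c * τ t))) :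
    f b = 0 := by
  have hlim : Tendsto (fun t => C * exp (-(c * τ t))) (𝓝[<] b) (𝓝 0) := by
    simpa using (tendsto_exp_atBot.comp
      (tendsto_neg_atTop_atBot.comp (hτ.const_mul_atTop hc))).const_mul C
  exact norm_le_zero_iff.1 (le_of_tendsto_of_tendsto hf.norm hlim hbound)

lemma eq_zero_of_hasDerivAt_le_neg_div_mul {y y' : ℝ → ℝ} {a b c : ℝ} (hab : a < b) (hc : 0 < c)
    (hy0 : ∀ t ∈ Ico a b, 0 ≤ y t) (hyb : ContinuousWithinAt y (Iio b) b)
    (hy : ∀ t ∈ Ico a b, HasDerivAt y (y' t) t)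
    (hle : ∀ t ∈ Ico a b, y' t ≤ -(c / (b - t)) * y t) : y b = 0 := by
  set τ : ℝ → ℝ := fun s => -log (b - s)
  -- `exp (c * τ t) = (b - t) ^ (-c)` is an integrating factor
  set F : ℝ → ℝ := fun s => y s * exp (c * τ s)
  have hF : ∀ t ∈ Ico a b,
      HasDerivAt F ((y' t + c / (b - t) * y t) * exp (c * τ t)) t := by
    intro t ht
    have h := (hy t ht).mul (((hasDerivAt_neg_log_sub ht.2).const_mul c).exp)
    exact h.congr_deriv (by rw [div_eq_mul_inv]; ring)
  have hanti : AntitoneOn F (Ico a b) := by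
    refine antitoneOn_of_hasDerivWithinAt_nonpos
      (f' := fun t => (y' t + c / (b - t) * y t) * exp (c * τ t)) (convex_Ico a b)
      (fun t ht => (hF t ht).continuousAt.continuousWithinAt) (fun t ht => ?_) (fun t ht => ?_)
    · exact (hF t (interior_subset ht)).hasDerivWithinAt
    · have ht' := interior_subset ht
      exact mul_nonpos_of_nonpos_of_nonneg (by linarith [hle t ht']) (exp_pos _).le
  refine eq_zero_of_norm_le_mul_exp_neg (C := F a) hc hyb (tendsto_neg_log_sub_nhdsLT b) ?_
  filter_upwards [Ioo_mem_nhdsLT hab] with t ht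
  have hFt : F t ≤ F a := hanti (left_mem_Ico.2 hab) (Ioo_subset_Ico_self ht) ht.1.le
  rw [norm_of_nonneg (hy0 t (Ioo_subset_Ico_self ht)), exp_neg, ← div_eq_mul_inv,
    le_div_iff₀ (exp_pos _)]
  exact hFt

lemma eq_zero_of_hasDerivAt_nonpos {y y' : ℝ → ℝ} {a b t : ℝ} (hab : a ≤ b)
    (hy0 : ∀ t, 0 ≤ y t) (hyc : ContinuousOn y (Ici a))
    (hy : ∀ t, a < t → t ≠ b → HasDerivAt y (y' t) t) (hy' : ∀ t, a < t → t ≠ b → y' t ≤ 0)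
    (ha : y a = 0) (ht : a ≤ t) : y t = 0 := by
  have hanti : ∀ D ⊆ Ici a, Convex ℝ D → b ∉ interior D → AntitoneOn y D := by
    intro D hDa hD hb
    have hint : ∀ τ ∈ interior D, a < τ ∧ τ ≠ b := fun τ hτ =>
      ⟨by simpa using interior_mono hDa hτ, fun h => hb (h ▸ hτ)⟩
    exact antitoneOn_of_hasDerivWithinAt_nonpos hD (hyc.mono hDa)
      (fun τ hτ => (hy τ (hint τ hτ).1 (hint τ hτ).2).hasDerivWithinAt)
      (fun τ hτ => hy' τ (hint τ hτ).1 (hint τ hτ).2)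
  have hIcc := hanti (Icc a b) Icc_subset_Ici_self (convex_Icc a b) (by simp)
  have hIci := hanti (Ici b) (Ici_subset_Ici.2 hab) (convex_Ici b) (by simp)
  have hyb : y b ≤ 0 := (hIcc ⟨le_rfl, hab⟩ ⟨hab, le_rfl⟩ hab).trans ha.le
  refine le_antisymm ?_ (hy0 t)
  rcases le_total t b with htb | hbt
  · exact (hIcc ⟨le_rfl, hab⟩ ⟨ht, htb⟩ ht).trans ha.le
  · exact (hIci self_mem_Ici hbt hbt).trans hyb

section LinearDecay

variable {τ τ' : ℝ → ℝ} {t0 T : ℝ}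

lemma norm_le_of_norm_deriv_le_mul_exp {E : Type*} [NormedAddCommGroup E] [NormedSpace ℝ E]
    {v v' : ℝ → E} {M b : ℝ} (hb : 0 < b) (hτ : ∀ t ∈ Ico t0 T, HasDerivAt τ (τ' t) t)
    (hv : ∀ t ∈ Ico t0 T, HasDerivAt v (v' t) t)
    (hv' : ∀ t ∈ Ico t0 T, ‖v' t‖ ≤ M * (τ' t * exp (b * τ t))) {t : ℝ} (ht : t ∈ Ico t0 T) :
    ‖v t‖ ≤ ‖v t0‖ + M / b * (exp (b * τ t) - exp (b * τ t0)) := by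
  set B : ℝ → ℝ := fun t => ‖v t0‖ + M / b * (exp (b * τ t) - exp (b * τ t0))
  have hB : ∀ t ∈ Ico t0 T, HasDerivAt B (M * (τ' t * exp (b * τ t))) t := by
    intro t ht
    have h := ((((hτ t ht).const_mul b).exp.sub_const (exp (b * τ t0))).const_mul (M / b)).const_add
      ‖v t0‖
    exact h.congr_deriv (by field_simp)
  have hsub : ∀ {s}, s ∈ Icc t0 t → s ∈ Ico t0 T := fun hs => ⟨hs.1, hs.2.trans_lt ht.2⟩
  refine image_norm_le_of_norm_deriv_right_le_deriv_boundary' (f := v) (B := B)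
    (fun s hs => (hv s (hsub hs)).continuousAt.continuousWithinAt)
    (fun s hs => (hv s (hsub (Ico_subset_Icc_self hs))).hasDerivWithinAt) (by simp [B])
    (fun s hs => (hB s (hsub hs)).continuousAt.continuousWithinAt)
    (fun s hs => (hB s (hsub (Ico_subset_Icc_self hs))).hasDerivWithinAt)
    (fun s hs => hv' s (hsub (Ico_subset_Icc_self hs))) ⟨ht.1, le_rfl⟩

lemma exists_norm_le_mul_exp_neg_of_hasDerivAt {E : Type*} [NormedAddCommGroup E]
    [NormedSpace ℂ E] {u g : ℝ → E} {μ : ℂ} {M c : ℝ}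
    (hτ : ∀ t ∈ Ico t0 T, HasDerivAt τ (τ' t) t) (hτ' : ∀ t ∈ Ico t0 T, 0 ≤ τ' t)
    (hτ0 : ∀ t ∈ Ico t0 T, 0 ≤ τ t) (hc : c < μ.re)
    (hg : ∀ t ∈ Ico t0 T, ‖g t‖ ≤ M * exp (-(c * τ t)))
    (hu : ∀ t ∈ Ico t0 T, HasDerivAt u (-(τ' t : ℂ) • (μ • u t + g t)) t) :
    ∃ C, ∀ t ∈ Ico t0 T, ‖u t‖ ≤ C * exp (-(c * τ t)) := by
  set a := μ.re
  set b := a - c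
  have hb : 0 < b := sub_pos.2 hc
  set e : ℝ → ℂ := fun t => Complex.exp (μ * τ t)
  have he : ∀ t, ‖e t‖ = exp (a * τ t) := fun t => by simp [e, Complex.norm_exp, a]
  have hv : ∀ t ∈ Ico t0 T, HasDerivAt (fun t => e t • u t) (-(τ' t : ℂ) • e t • g t) t :=
    fun t ht => ((((hτ t ht).ofReal_comp.const_mul μ).cexp).smul (hu t ht)).congr_deriv
      (by module)
  have hv' : ∀ t ∈ Ico t0 T, ‖-(τ' t : ℂ) • e t • g t‖ ≤ M * (τ' t * exp (b * τ t)) := by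
    intro t ht
    rw [norm_smul, norm_smul, norm_neg, Complex.norm_real, norm_of_nonneg (hτ' t ht), he]
    calc τ' t * (exp (a * τ t) * ‖g t‖)
        ≤ τ' t * (exp (a * τ t) * (M * exp (-(c * τ t)))) := by
          gcongr
          exacts [hτ' t ht, hg t ht]
      _ = M * (τ' t * exp (b * τ t)) := by
          rw [show b * τ t = a * τ t + -(c * τ t) by ring, exp_add]; ring
  refine ⟨‖e t0 • u t0‖ + M / b, fun t ht => ?_⟩
  have hvt := norm_le_of_norm_deriv_le_mul_exp hb hτ hv hv' ht
  have hM : 0 ≤ M :=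
    nonneg_of_mul_nonneg_left ((norm_nonneg _).trans (hg t0 ⟨le_rfl, ht.1.trans_lt ht.2⟩))
      (exp_pos _)
  rw [norm_smul, he] at hvt
  have hbτ : 1 ≤ exp (b * τ t) := one_le_exp (mul_nonneg hb.le (hτ0 t ht))
  have hbτ0 : 0 ≤ M / b * exp (b * τ t0) := by positivity
  rw [show -(c * τ t) = b * τ t - a * τ t by ring, exp_sub, ← mul_div_assoc,
    le_div_iff₀ (exp_pos _)]
  nlinarith [norm_nonneg (e t0 • u t0)]

lemma HasDerivAt.matrix_mulVec {𝕜 m n : Type*} [NontriviallyNormedField 𝕜] [NormedAlgebra ℝ 𝕜]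
    [Fintype m] [Fintype n] (P : Matrix m n 𝕜) {v : ℝ → n → 𝕜} {v' : n → 𝕜} {t : ℝ}
    (hv : HasDerivAt v v' t) : HasDerivAt (fun s => P *ᵥ v s) (P *ᵥ v') t :=
  hasDerivAt_pi.2 fun i => HasDerivAt.fun_sum fun j _ => (hasDerivAt_pi.1 hv j).const_mul (P i j)

lemma exists_norm_le_mul_exp_neg_of_aeval_mulVec_eq_zero {n : Type*} [Fintype n] [DecidableEq n]
    (A : Matrix n n ℂ)
    (hτ : ∀ t ∈ Ico t0 T, HasDerivAt τ (τ' t) t) (hτ' : ∀ t ∈ Ico t0 T, 0 ≤ τ' t)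
    (hτ0 : ∀ t ∈ Ico t0 T, 0 ≤ τ t) (s : Multiset ℂ) (hs : ∀ μ ∈ s, 0 < μ.re)
    {v : ℝ → n → ℂ} (hv : ∀ t ∈ Ico t0 T, HasDerivAt v (-(τ' t : ℂ) • A *ᵥ v t) t)
    (hker : ∀ t ∈ Ico t0 T, aeval A (s.map fun μ => X - C μ).prod *ᵥ v t = 0) :
    ∃ C c, 0 < c ∧ ∀ t ∈ Ico t0 T, ‖v t‖ ≤ C * exp (-(c * τ t)) := by
  induction s using Multiset.induction_on generalizing v with
  | empty =>
    refine ⟨0, 1, one_pos, fun t ht => ?_⟩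
    simpa using hker t ht
  | cons μ s ih =>
    -- `(A - μ) v` solves the same equation and is killed by the remaining factors
    set P := aeval A (X - C μ)
    have hP : P = A - μ • 1 := by simp [P, Algebra.algebraMap_eq_smul_one]
    have hPA : P * A = A * P := by
      have h := congrArg (aeval A) (mul_comm (X - C μ) X)
      rwa [map_mul, map_mul, aeval_X] at h
    obtain ⟨C, c, hc, hw⟩ := ih (fun ν hν => hs ν (Multiset.mem_cons_of_mem hν))
      (v := fun t => P *ᵥ v t)
      (fun t ht => ((hv t ht).matrix_mulVec P).congr_deriv (by
        rw [Matrix.mulVec_smul, Matrix.mulVec_mulVec, hPA, ← Matrix.mulVec_mulVec]))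
      (fun t ht => by
        rw [Matrix.mulVec_mulVec, ← map_mul, mul_comm, ← hker t ht, Multiset.map_cons,
          Multiset.prod_cons])
    have hμ := hs μ (Multiset.mem_cons_self μ s)
    set c' := min c (μ.re / 2)
    have hw' : ∀ t ∈ Ico t0 T, ‖P *ᵥ v t‖ ≤ C * exp (-(c' * τ t)) := by
      intro t ht
      have hC : 0 ≤ C := nonneg_of_mul_nonneg_left ((norm_nonneg _).trans (hw t ht)) (exp_pos _)
      refine (hw t ht).trans ?_
      gcongr
      exacts [hτ0 t ht, min_le_left _ _]
    obtain ⟨C', hv_le⟩ := exists_norm_le_mul_exp_neg_of_hasDerivAt hτ hτ' hτ0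
      (lt_of_le_of_lt (min_le_right _ _) (half_lt_self hμ)) hw'
      (fun t ht => (hv t ht).congr_deriv (by rw [hP, Matrix.sub_mulVec, Matrix.smul_mulVec,
        Matrix.one_mulVec, add_sub_cancel]))
    exact ⟨C', c', lt_min hc (half_pos hμ), hv_le⟩

end LinearDecay

section Spectrum

variable {n : Type*} [Fintype n]

lemma aeval_prod_roots_charpoly_eq_zero [DecidableEq n] (A : Matrix n n ℂ) :
    aeval A (A.charpoly.roots.map fun μ => X - C μ).prod = 0 := by
  rw [prod_multiset_X_sub_C_of_monic_of_roots_card_eq A.charpoly_monic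
    IsAlgClosed.card_roots_eq_natDegree, Matrix.aeval_self_charpoly]

open Finset in
/-- Gershgorin discs centred at `A k k` with radius at most `A k k` meet the imaginary axis only
at `0`, which is not an eigenvalue of a nonsingular matrix. -/
lemma re_pos_of_mem_roots_charpoly [DecidableEq n] (A : Matrix n n ℝ)
    (hdom : ∀ k, ∑ j ∈ univ.erase k, |A k j| ≤ A k k) (hdet : A.det ≠ 0) {μ : ℂ}
    (hμ : μ ∈ (A.map Complex.ofReal).charpoly.roots) : 0 < μ.re := by
  have hroot := isRoot_of_mem_roots hμ
  have hμ0 : μ ≠ 0 := by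
    rintro rfl
    apply hdet
    have h := (A.map Complex.ofReal).det_eq_sign_charpoly_coeff
    rw [coeff_zero_eq_eval_zero, hroot.eq_zero, mul_zero] at h
    exact Complex.ofReal_eq_zero.1 ((Complex.ofRealHom.map_det A).trans h)
  have heig : Module.End.HasEigenvalue (Matrix.toLin' (A.map Complex.ofReal)) μ := by
    rwa [Module.End.hasEigenvalue_iff_isRoot_charpoly, Matrix.charpoly_toLin']
  obtain ⟨k, hk⟩ := eigenvalue_mem_ball heig
  have hball : ‖μ - A k k‖ ≤ A k k := by
    refine (mem_closedBall_iff_norm.1 hk).trans (le_of_eq_of_le ?_ (hdom k))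
    simp
  have ha : 0 ≤ A k k := (sum_nonneg fun j _ => abs_nonneg _).trans (hdom k)
  have hsq : (μ.re - A k k) ^ 2 + μ.im ^ 2 ≤ A k k ^ 2 := by
    have h := pow_le_pow_left₀ (norm_nonneg _) hball 2
    rwa [Complex.sq_norm, Complex.normSq_apply, Complex.sub_re, Complex.sub_im,
      Complex.ofReal_re, Complex.ofReal_im, sub_zero, ← sq, ← sq] at h
  have hnorm : 0 < μ.re ^ 2 + μ.im ^ 2 := by
    have h := Complex.normSq_pos.2 hμ0
    rwa [Complex.normSq_apply, ← sq, ← sq] at h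
  nlinarith

lemma HasDerivAt.ofReal_smul_mulVec (A : Matrix n n ℝ) {x : ℝ → n → ℝ} {r t : ℝ}
    (hx : HasDerivAt x (r • A *ᵥ x t) t) :
    HasDerivAt (fun s j => (x s j : ℂ)) ((r : ℂ) • A.map Complex.ofReal *ᵥ fun j => (x t j : ℂ))
      t :=
  hasDerivAt_pi.2 fun j => ((hasDerivAt_pi.1 hx j).ofReal_comp).congr_deriv (by
    simp only [Pi.smul_apply, smul_eq_mul, Complex.ofReal_mul]
    exact congrArg _ (Complex.ofRealHom.map_mulVec A (x t) j))

lemma eq_zero_of_hasDerivAt_neg_smul_mulVec [DecidableEq n] (A : Matrix n n ℝ)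
    (hA : ∀ μ ∈ (A.map Complex.ofReal).charpoly.roots, 0 < μ.re)
    {x : ℝ → n → ℝ} {t0 T ρ β : ℝ} (hT : t0 < T) (hρ : 0 ≤ ρ) (hβ : 0 < β)
    (hx : ContinuousWithinAt x (Iio T) T)
    (hx' : ∀ t ∈ Ioo t0 T, HasDerivAt x (-(ρ + β / (T - t)) • A *ᵥ x t) t) : x T = 0 := by
  obtain ⟨t1, ht01, ht1T⟩ := exists_between hT
  have ht1 : Ico t1 T ⊆ Ioo t0 T := fun t ht => ⟨ht01.trans_le ht.1, ht.2⟩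
  -- the primitive of `ρ + β / (T - t)` vanishing at `t1`
  set τ : ℝ → ℝ := fun t => β * -log (T - t) + (ρ * (t - t1) + β * log (T - t1))
  have hτ : ∀ t ∈ Ico t1 T, HasDerivAt τ (ρ + β / (T - t)) t := fun t ht =>
    (((hasDerivAt_neg_log_sub ht.2).const_mul β).add
      ((((hasDerivAt_id t).sub_const t1).const_mul ρ).add_const _)).congr_deriv (by ring)
  have hτ0 : ∀ t ∈ Ico t1 T, 0 ≤ τ t := fun t ht => by
    have hlog : log (T - t) ≤ log (T - t1) := log_le_log (sub_pos.2 ht.2) (by linarith [ht.1])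
    nlinarith [ht.1]
  have hτT : Tendsto τ (𝓝[<] T) atTop :=
    ((tendsto_neg_log_sub_nhdsLT T).const_mul_atTop hβ).atTop_add
      (((continuous_const.mul (continuous_sub_right t1)).add continuous_const).continuousWithinAt
        (s := Iio T) (x := T))
  obtain ⟨C', c, hc, hbound⟩ := exists_norm_le_mul_exp_neg_of_aeval_mulVec_eq_zero _ hτ
    (fun t ht => by have := ht.2; positivity) hτ0 _ hA
    (v := fun t j => (x t j : ℂ))
    (fun t ht => by simpa using (hx' t (ht1 ht)).ofReal_smul_mulVec A)
    (fun t _ => by rw [aeval_prod_roots_charpoly_eq_zero, Matrix.zero_mulVec])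
  have hvT : (fun j => (x T j : ℂ)) = 0 := by
    refine eq_zero_of_norm_le_mul_exp_neg (f := fun t j => (x t j : ℂ)) (C := C') hc ?_ hτT ?_
    · exact ((continuous_pi fun j => Complex.continuous_ofReal.comp (continuous_apply j)).tendsto
        (x T)).comp hx
    · filter_upwards [Ico_mem_nhdsLT ht1T] with t ht using hbound t ht
  funext j
  exact Complex.ofReal_eq_zero.1 (congrFun hvT j)

end Spectrum

lemma eq_zero_of_hasDerivAt_clm_of_eq_zero {E : Type*} [NormedAddCommGroup E] [NormedSpace ℝ E]
    (F : E →L[ℝ] E) {x : ℝ → E} {T : ℝ} (hx : ContinuousOn x (Ici T))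
    (hx' : ∀ t, T < t → HasDerivAt x (F (x t)) t) (hT : x T = 0) {t : ℝ} (ht : T ≤ t) :
    x t = 0 := by
  have hxT : HasDerivWithinAt x (F (x T)) (Ici T) T := by
    refine hasDerivWithinAt_Ici_of_tendsto_deriv (s := Ioi T)
      (fun s hs => (hx' s hs).differentiableAt.differentiableWithinAt)
      ((hx T self_mem_Ici).mono Ioi_subset_Ici_self) self_mem_nhdsWithin ?_
    have hFx : Tendsto (fun s => F (x s)) (𝓝[>] T) (𝓝 (F (x T))) :=
      (F.continuous.tendsto _).comp ((hx T self_mem_Ici).mono Ioi_subset_Ici_self)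
    refine hFx.congr' ?_
    filter_upwards [self_mem_nhdsWithin] with s hs using (hx' s hs).deriv.symm
  have h := ODE_solution_unique (v := fun _ => F) (g := fun _ => 0) (b := t)
    (fun _ => F.lipschitz) (hx.mono Icc_subset_Ici_self) (fun s hs => ?_) continuousOn_const
    (fun s _ => by simpa using hasDerivWithinAt_const s (Ici s) (0 : E)) hT
  · exact h ⟨ht, le_rfl⟩
  · rcases hs.1.eq_or_lt with rfl | hTs
    · exact hxT
    · exact (hx' s hTs).hasDerivWithinAt

section SignedLaplacian

open Finset

variable {N : ℕ} {W : Matrix (Fin N) (Fin N) ℝ}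

lemma sLap_mulVec_apply (W : Matrix (Fin N) (Fin N) ℝ) (v : Fin N → ℝ) (k : Fin N) :
    (sLap W *ᵥ v) k = (∑ l, |W k l|) * v k - ∑ l, W k l * v l := by
  simp only [sLap, Matrix.sub_mulVec, Pi.sub_apply, Matrix.mulVec_diagonal]
  rfl

lemma sum_abs_sLap_erase_le (W : Matrix (Fin N) (Fin N) ℝ) (k : Fin N) :
    ∑ j ∈ univ.erase k, |sLap W k j| ≤ sLap W k k := by
  have hoff : ∑ j ∈ univ.erase k, |sLap W k j| = ∑ j ∈ univ.erase k, |W k j| :=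
    sum_congr rfl fun j hj => by simp [sLap, Matrix.diagonal_apply_ne _ (ne_of_mem_erase hj).symm]
  have hdiag : sLap W k k = ∑ j, |W k j| - W k k := by simp [sLap]
  rw [hoff, hdiag, ← add_sum_erase univ (fun j => |W k j|) (mem_univ k)]
  linarith [le_abs_self (W k k)]

variable {v : Fin N → ℝ} {m : ℝ}

lemma mul_mul_eq_abs_mul_sq_of_abs_eq (hv : sLap W *ᵥ v = 0) (hle : ∀ l, |v l| ≤ m) {k : Fin N}
    (hk : |v k| = m) (l : Fin N) : W k l * (v k * v l) = |W k l| * m ^ 2 := by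
  have hterm : ∀ j ∈ Finset.univ, W k j * (v k * v j) ≤ |W k j| * m ^ 2 := fun j _ =>
    calc W k j * (v k * v j) ≤ |W k j| * (|v k| * |v j|) := by
          rw [← abs_mul, ← abs_mul]; exact le_abs_self _
      _ ≤ |W k j| * m ^ 2 := by
          rw [hk, sq]; gcongr; exacts [hk ▸ abs_nonneg _, hle j]
  have hrow : ∑ j, W k j * v j = (∑ j, |W k j|) * v k := by
    have h := congrFun hv k
    rw [sLap_mulVec_apply, Pi.zero_apply, sub_eq_zero] at h
    exact h.symm
  have hsum : ∑ j, W k j * (v k * v j) = ∑ j, |W k j| * m ^ 2 := by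
    simp_rw [mul_left_comm _ (v k), ← mul_sum, hrow, ← sum_mul, ← hk, sq_abs]
    ring
  exact (sum_eq_sum_iff_of_le hterm).1 hsum l (mem_univ l)

lemma abs_eq_of_reaches (hv : sLap W *ᵥ v = 0) (hle : ∀ l, |v l| ≤ m) {j k : Fin N}
    (hjk : Reaches W j k) (hk : |v k| = m) : |v j| = m := by
  induction hjk using Relation.ReflTransGen.head_induction_on with
  | refl => exact hk
  | @head a c hedge _ ih =>
    have hkey := mul_mul_eq_abs_mul_sq_of_abs_eq hv hle ih a
    have hbound : |W c a| * m ^ 2 ≤ |W c a| * (m * |v a|) := by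
      rw [← hkey, ← ih, ← abs_mul, ← abs_mul]
      exact le_abs_self _
    have hm : m * m ≤ m * |v a| := by
      rw [← sq]; exact le_of_mul_le_mul_left hbound (abs_pos.2 hedge)
    nlinarith [hle a, abs_nonneg (v a)]

lemma exists_isGauge_leaders_of_sLap_mulVec_eq_zero (hQS : QuasiStronglyConnected W)
    (hv : sLap W *ᵥ v = 0) (hv0 : v ≠ 0) : ∃ g, IsGauge W {k | IsLeader W k} g := by
  obtain ⟨r, hr⟩ := hQS
  obtain ⟨k0, -, hk0⟩ := exists_max_image univ (fun k => |v k|) ⟨r, mem_univ r⟩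
  set m := |v k0|
  have hle : ∀ l, |v l| ≤ m := fun l => hk0 l (mem_univ l)
  have hm : 0 < m := by
    obtain ⟨l, hl⟩ := Function.ne_iff.1 hv0
    exact (abs_pos.2 hl).trans_le (hle l)
  have hleader : ∀ k, IsLeader W k → |v k| = m := fun k hk =>
    abs_eq_of_reaches hv hle (hk r (hr k)) (abs_eq_of_reaches hv hle (hr k0) rfl)
  refine ⟨fun k => v k / m, fun k hk => ?_, fun k hk l _ => ?_⟩
  · rcases abs_eq hm.le |>.1 (hleader k hk) with h | h
    · left; simp [h, hm.ne']
    · right; simp [h, hm.ne']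
  · have h := mul_mul_eq_abs_mul_sq_of_abs_eq hv hle (hleader k hk) l
    field_simp
    linear_combination h

lemma sLap_det_ne_zero (hQS : QuasiStronglyConnected W)
    (hunb : ¬ ∃ g : Fin N → ℝ, IsGauge W {k | IsLeader W k} g) : (sLap W).det ≠ 0 := fun h => by
  obtain ⟨v, hv0, hv⟩ := Matrix.exists_mulVec_eq_zero_iff.2 h
  exact hunb (exists_isGauge_leaders_of_sLap_mulVec_eq_zero hQS hv hv0)

end SignedLaplacian

lemma mul_sliding_deriv_le {σ s d a μ1 : ℝ} (hs : s * σ = |σ|) (hd : |d| ≤ μ1) :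
    σ * (-μ1 * s - a * σ + d) ≤ -a * σ ^ 2 := by
  have hσd : σ * d ≤ |σ| * μ1 :=
    (le_abs_self _).trans ((abs_mul σ d).trans_le (mul_le_mul_of_nonneg_left hd (abs_nonneg σ)))
  have h : σ * (-μ1 * s - a * σ + d) = -μ1 * (s * σ) - a * σ ^ 2 + σ * d := by ring
  rw [h, hs]
  linarith

namespace SMCTraj

variable {N : ℕ} {W : Matrix (Fin N) (Fin N) ℝ} {κ ρ1 ρ2 Tr Ts μ1 μ2 μ3 : ℝ}
  {d x ς s : ℝ → Fin N → ℝ}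

lemma hasDerivAt_sliding (htraj : SMCTraj W κ ρ1 ρ2 Tr Ts μ1 μ2 μ3 d x ς s) {t : ℝ} (h0 : 0 ≤ t)
    (hTr : t ≠ Tr) (hT : t ≠ Tr + Ts) (k : Fin N) :
    HasDerivAt (fun τ => x τ k + ς τ k)
      (-μ1 * s t k - (μ2 + μ3 * gain κ Tr t) * (x t k + ς t k) + d t k) t := by
  obtain ⟨hς, hx⟩ := htraj.2.2.2 t h0 hTr hT
  exact ((hx k).add (hasDerivAt_pi.1 hς k)).congr_deriv (by
    simp only [Pi.smul_apply, smul_eq_mul]; ring)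

lemma sliding_eq_zero (htraj : SMCTraj W κ ρ1 ρ2 Tr Ts μ1 μ2 μ3 d x ς s) (hκ : 0 < κ)
    (hTr : 0 < Tr) (hTs : 0 < Ts) (hμ2 : 0 ≤ μ2) (hμ3 : 0 < μ3)
    (hd : ∀ t, 0 ≤ t → ∀ k, |d t k| ≤ μ1) {t : ℝ} (ht : Tr ≤ t) (k : Fin N) :
    x t k + ς t k = 0 := by
  set σ : ℝ → ℝ := fun τ => x τ k + ς τ k
  set y : ℝ → ℝ := fun τ => σ τ ^ 2
  have hyc : Continuous y :=
    (((continuous_apply k).comp htraj.1).add ((continuous_apply k).comp htraj.2.1)).pow 2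
  set y' : ℝ → ℝ := fun τ => 2 * (σ τ * (-μ1 * s τ k - (μ2 + μ3 * gain κ Tr τ) * σ τ + d τ k))
  have hy : ∀ τ, 0 ≤ τ → τ ≠ Tr → τ ≠ Tr + Ts → HasDerivAt y (y' τ) τ := fun τ h0 h1 h2 =>
    ((htraj.hasDerivAt_sliding h0 h1 h2 k).pow 2).congr_deriv (by simp only [y']; ring)
  have hy_le : ∀ τ, 0 ≤ τ → y' τ ≤ -(2 * (μ2 + μ3 * gain κ Tr τ)) * y τ := fun τ h0 => by
    have h := mul_sliding_deriv_le (a := μ2 + μ3 * gain κ Tr τ) (htraj.2.2.1 τ k).2 (hd τ h0 k)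
    simp only [y', y]
    linarith
  have hyTr : y Tr = 0 := by
    refine eq_zero_of_hasDerivAt_le_neg_div_mul hTr (by positivity : 0 < 2 * μ3 * κ)
      (fun τ _ => sq_nonneg _) hyc.continuousWithinAt
      (fun τ hτ => hy τ hτ.1 hτ.2.ne (by linarith [hτ.2])) fun τ hτ => ?_
    have : 0 ≤ 2 * μ2 * y τ := by positivity
    refine (hy_le τ hτ.1).trans ?_
    rw [gain_of_lt hτ.1 hτ.2, mul_div_assoc]
    linarith
  have hyt : y t = 0 := by
    refine eq_zero_of_hasDerivAt_nonpos (y := y) (by linarith) (fun τ => sq_nonneg (σ τ))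
      hyc.continuousOn (fun τ hτ hT => hy τ (hTr.trans hτ).le hτ.ne' hT) (fun τ hτ _ => ?_) hyTr ht
    have : 0 ≤ (2 * (μ2 + μ3 * gain κ Tr τ)) * y τ := by
      have := gain_nonneg hκ.le Tr τ
      positivity
    linarith [hy_le τ (hTr.trans hτ).le]
  exact pow_eq_zero_iff two_ne_zero |>.1 hyt

lemma hasDerivAt_of_sliding_eq_zero (htraj : SMCTraj W κ ρ1 ρ2 Tr Ts μ1 μ2 μ3 d x ς s)
    (hTr : 0 ≤ Tr) (hσ : ∀ t, Tr ≤ t → ∀ k, x t k + ς t k = 0) {t : ℝ} (ht : Tr < t)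
    (hT : t ≠ Tr + Ts) :
    HasDerivAt x (-(ρ1 + ρ2 * gain κ (Tr + Ts) t) • sLap W *ᵥ x t) t := by
  have hxς : x =ᶠ[𝓝 t] -ς := by
    filter_upwards [Ioi_mem_nhds ht] with τ hτ
    funext k
    exact eq_neg_of_add_eq_zero_left (hσ τ hτ.le k)
  rw [neg_smul]
  exact (htraj.2.2.2 t (hTr.trans ht.le) ht.ne' hT).1.neg.congr_of_eventuallyEq hxς

end SMCTraj

theorem smc_prescribed_time_stability_quasi_unbalanced_leaders_general
    {N : ℕ} (W : Matrix (Fin N) (Fin N) ℝ)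
    (hQS : QuasiStronglyConnected W)
    (hunb : ¬ ∃ g : Fin N → ℝ, IsGauge W {k | IsLeader W k} g)
    (κ ρ1 ρ2 Tr Ts μ1 μ2 μ3 δ : ℝ) (hκ : 2 < κ)
    (hρ1 : 0 < ρ1) (hρ2 : 0 < ρ2) (hTr : 0 < Tr) (hTs : 0 < Ts)
    (hμ2 : 0 < μ2) (hμ3 : 0 < μ3) (hμ1 : δ < μ1)
    (d : ℝ → Fin N → ℝ) (hd : ∀ t : ℝ, 0 ≤ t → ∀ k, |d t k| ≤ δ)
    (x ς s : ℝ → Fin N → ℝ)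
    (htraj : SMCTraj W κ ρ1 ρ2 Tr Ts μ1 μ2 μ3 d x ς s) :
    ∀ t : ℝ, Tr + Ts ≤ t → ∀ k, x t k = 0 := by
  have hκ0 : 0 < κ := by linarith
  have hσ := fun t ht => htraj.sliding_eq_zero hκ0 hTr hTs hμ2.le hμ3
    (fun t ht k => (hd t ht k).trans hμ1.le) (t := t) ht
  have hx' := fun t ht hT => htraj.hasDerivAt_of_sliding_eq_zero hTr.le hσ (t := t) ht hT
  have hxT : x (Tr + Ts) = 0 := by
    refine eq_zero_of_hasDerivAt_neg_smul_mulVec (sLap W) (fun μ hμ => re_pos_of_mem_roots_charpoly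
      _ (sum_abs_sLap_erase_le W) (sLap_det_ne_zero hQS hunb) hμ) (t0 := Tr) (by linarith)
      hρ1.le (mul_pos hρ2 hκ0) htraj.1.continuousWithinAt fun t ht => ?_
    have h := hx' t ht.1 ht.2.ne
    rwa [gain_of_lt (hTr.trans ht.1).le ht.2, ← mul_div_assoc] at h
  intro t ht k
  set F : (Fin N → ℝ) →L[ℝ] (Fin N → ℝ) :=
    -ρ1 • LinearMap.toContinuousLinearMap (Matrix.mulVecLin (sLap W))
  refine congrFun (eq_zero_of_hasDerivAt_clm_of_eq_zero F htraj.1.continuousOn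
    (fun t' ht' => ?_) hxT ht) k
  have h := hx' t' (by linarith) ht'.ne'
  rwa [gain_of_le ht'.le, mul_zero, add_zero] at h

theorem smc_prescribed_time_stability_quasi_unbalanced_leaders
    {N : ℕ} (hN : 2 ≤ N) (W : Matrix (Fin N) (Fin N) ℝ)
    (hdiag : ∀ k, W k k = 0)
    (hQS : QuasiStronglyConnected W)
    (hunb : ¬ ∃ g : Fin N → ℝ, IsGauge W {k | IsLeader W k} g)
    (κ ρ1 ρ2 Tr Ts μ1 μ2 μ3 δ : ℝ) (hκ : 2 < κ)
    (hρ1 : 0 < ρ1) (hρ2 : 0 < ρ2) (hTr : 0 < Tr) (hTs : 0 < Ts)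
    (hμ2 : 0 < μ2) (hμ3 : 0 < μ3) (hδ : 0 ≤ δ) (hμ1 : δ < μ1)
    (d : ℝ → Fin N → ℝ) (hd : ∀ t : ℝ, 0 ≤ t → ∀ k, |d t k| ≤ δ)
    (x ς s : ℝ → Fin N → ℝ)
    (htraj : SMCTraj W κ ρ1 ρ2 Tr Ts μ1 μ2 μ3 d x ς s) :
    ∀ t : ℝ, Tr + Ts ≤ t → ∀ k, x t k = 0 :=
  smc_prescribed_time_stability_quasi_unbalanced_leaders_general W hQS hunb κ ρ1 ρ2 Tr Ts μ1 μ2 μ3 δ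
    hκ hρ1 hρ2 hTr hTs hμ2 hμ3 hμ1 d hd x ς s htraj
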